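/- For every integer k ≥ 2 and every q ∈ (0,1), let V ∈ B(H_k) be defined on basis vectors by V e_{(m,a)} = e_{(m+1, a+δ_{k−1})} if a₁ = ⋯ = a_{k−2} = 0, and V e_{(m,a)} = e_{(m,a)} otherwise. Then V belongs to B_k(q), V is an isometry (V*V = 1), and 1 − VV* equals the orthogonal projection onto the closed linear span of {e_{(m,0)} : m ∈ ℤ} (in tensor notation, 1 − VV* = 1⊗p^{⊗(k−1)}, where p is the rank-one projection onto e₀). -/

import Mathlib

noncomputable section

/-- The Hilbert space `H_k = ℓ²(ℤ × ℕ^{k-1})`. -/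
abbrev Hk (k : ℕ) : Type := lp (fun _ : ℤ × (Fin (k - 1) → ℕ) => ℂ) 2

/-- The canonical orthonormal basis vectors `e_{(m,a)}` of `H_k`. -/
noncomputable def ek (k : ℕ) (x : ℤ × (Fin (k - 1) → ℕ)) : Hk k := lp.single 2 x 1

/-- The defining property of the generator
`x_l(q) = t ⊗ (q^N)^{⊗(l−1)} ⊗ √(1−q^{2N})S* ⊗ 1^{⊗(k−1−l)}` for `1 ≤ l ≤ k−1`
(here `l : Fin (k-1)`), with the convention `0⁰ = 1`. -/
def IsXl (k : ℕ) (q : ℝ) (l : Fin (k - 1)) (T : Hk k →L[ℂ] Hk k) : Prop :=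
  ∀ (m : ℤ) (a : Fin (k - 1) → ℕ),
    T (ek k (m, a)) =
      ((q ^ (∑ i ∈ Finset.Iio l, a i) * Real.sqrt (1 - q ^ (2 * a l + 2)) : ℝ) : ℂ) •
        ek k (m + 1, a + Pi.single l 1)

/-- The defining property of the top generator `x_k(q) = t ⊗ (q^N)^{⊗(k−1)}`. -/
def IsXtop (k : ℕ) (q : ℝ) (T : Hk k →L[ℂ] Hk k) : Prop :=
  ∀ (m : ℤ) (a : Fin (k - 1) → ℕ),
    T (ek k (m, a)) = ((q ^ (∑ i, a i) : ℝ) : ℂ) • ek k (m + 1, a)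

/-- The unital C*-subalgebra `B_k(q)` of `B(H_k)` generated by `x_1(q), …, x_k(q)`. -/
noncomputable def Bk (k : ℕ) (x : Fin (k - 1) → (Hk k →L[ℂ] Hk k))
    (xtop : Hk k →L[ℂ] Hk k) : StarSubalgebra ℂ (Hk k →L[ℂ] Hk k) :=
  (StarAlgebra.adjoin ℂ (Set.range x ∪ {xtop})).topologicalClosure

namespace S13

open scoped ComplexConjugate

abbrev Hsp (ι : Type*) : Type _ := lp (fun _ : ι => ℂ) 2

variable {ι : Type*} [DecidableEq ι]

lemma sq_sum_le (f : Hsp ι) (s : Finset ι) :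
    ∑ i ∈ s, ‖(f : ι → ℂ) i‖ ^ 2 ≤ ‖f‖ ^ 2 := by
  have h := lp.sum_rpow_le_norm_rpow (p := 2) (E := fun _ : ι => ℂ) (by norm_num) f s
  simp only [ENNReal.toReal_ofNat] at h
  calc ∑ i ∈ s, ‖(f : ι → ℂ) i‖ ^ 2
      = ∑ i ∈ s, ‖(f : ι → ℂ) i‖ ^ (2:ℝ) := by
        refine Finset.sum_congr rfl fun i _ => ?_
        rw [← Real.rpow_natCast]; norm_num
    _ ≤ ‖f‖ ^ (2:ℝ) := h
    _ = ‖f‖ ^ 2 := by rw [← Real.rpow_natCast]; norm_num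

lemma rpow_two_eq (x : ℝ) : x ^ (2:ℝ) = x ^ 2 := by
  rw [← Real.rpow_natCast x 2]; norm_num

/-- The underlying function of a "reindexing with multiplier" operator. -/
def rmFun (τ : ι → ι) (w : ι → ℂ) (f : ι → ℂ) : ι → ℂ := fun y => w y * f (τ y)

lemma rm_finset_bound (τ : ι → ι) (w : ι → ℂ)
    (hinj : ∀ y z, w y ≠ 0 → w z ≠ 0 → τ y = τ z → y = z)
    {C : ℝ} (hC : 0 ≤ C) (hw : ∀ i, ‖w i‖ ≤ C) (f : Hsp ι) (s : Finset ι) :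
    ∑ y ∈ s, ‖rmFun τ w (f : ι → ℂ) y‖ ^ 2 ≤ (C * ‖f‖) ^ 2 := by
  classical
  have key : ∑ y ∈ s, ‖rmFun τ w (f : ι → ℂ) y‖ ^ 2
      = ∑ y ∈ s.filter (fun y => w y ≠ 0), ‖rmFun τ w (f : ι → ℂ) y‖ ^ 2 := by
    refine (Finset.sum_filter_of_ne ?_).symm
    intro y _ h
    contrapose! h
    simp [rmFun, h]
  rw [key]
  have h1 : ∑ y ∈ s.filter (fun y => w y ≠ 0), ‖rmFun τ w (f : ι → ℂ) y‖ ^ 2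
      ≤ C ^ 2 * ∑ y ∈ s.filter (fun y => w y ≠ 0), ‖(f : ι → ℂ) (τ y)‖ ^ 2 := by
    rw [Finset.mul_sum]
    refine Finset.sum_le_sum fun y _ => ?_
    have hnm : ‖rmFun τ w (f : ι → ℂ) y‖ = ‖w y‖ * ‖(f : ι → ℂ) (τ y)‖ := norm_mul _ _
    rw [hnm, mul_pow]
    gcongr
    exact hw y
  have h2 : ∑ y ∈ s.filter (fun y => w y ≠ 0), ‖(f : ι → ℂ) (τ y)‖ ^ 2
      = ∑ x ∈ (s.filter (fun y => w y ≠ 0)).image τ, ‖(f : ι → ℂ) x‖ ^ 2 := by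
    rw [Finset.sum_image]
    intro y hy z hz h
    simp only [Finset.mem_coe, Finset.mem_filter] at hy hz
    exact hinj y z hy.2 hz.2 h
  calc _ ≤ C ^ 2 * ∑ y ∈ s.filter (fun y => w y ≠ 0), ‖(f : ι → ℂ) (τ y)‖ ^ 2 := h1
    _ = C ^ 2 * ∑ x ∈ (s.filter (fun y => w y ≠ 0)).image τ, ‖(f : ι → ℂ) x‖ ^ 2 := by rw [h2]
    _ ≤ C ^ 2 * ‖f‖ ^ 2 := by
        gcongr
        exact sq_sum_le f _
    _ = (C * ‖f‖) ^ 2 := by ring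

lemma rm_memℓp (τ : ι → ι) (w : ι → ℂ)
    (hinj : ∀ y z, w y ≠ 0 → w z ≠ 0 → τ y = τ z → y = z)
    {C : ℝ} (hC : 0 ≤ C) (hw : ∀ i, ‖w i‖ ≤ C) (f : Hsp ι) :
    Memℓp (rmFun τ w (f : ι → ℂ)) 2 := by
  apply memℓp_gen' (C := (C * ‖f‖) ^ 2)
  intro s
  have := rm_finset_bound τ w hinj hC hw f s
  simp only [ENNReal.toReal_ofNat]
  calc ∑ i ∈ s, ‖rmFun τ w (f : ι → ℂ) i‖ ^ (2:ℝ)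
      = ∑ i ∈ s, ‖rmFun τ w (f : ι → ℂ) i‖ ^ 2 := by
        refine Finset.sum_congr rfl fun i _ => rpow_two_eq _
    _ ≤ (C * ‖f‖) ^ 2 := this

/-- The "reindexing with multiplier" bounded operator on `ℓ²`. -/
def rmCLM (τ : ι → ι) (w : ι → ℂ)
    (hinj : ∀ y z, w y ≠ 0 → w z ≠ 0 → τ y = τ z → y = z)
    {C : ℝ} (hC : 0 ≤ C) (hw : ∀ i, ‖w i‖ ≤ C) : Hsp ι →L[ℂ] Hsp ι :=
  LinearMap.mkContinuous
    { toFun := fun f => (⟨rmFun τ w (f : ι → ℂ), rm_memℓp τ w hinj hC hw f⟩ : Hsp ι)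
      map_add' := fun f g => by
        apply lp.ext
        funext y
        simp [rmFun, mul_add]
        rfl
      map_smul' := fun c f => by
        apply lp.ext
        funext y
        simp [rmFun]
        ring }
    C
    (by
      intro f
      dsimp only [LinearMap.coe_mk, AddHom.coe_mk]
      apply lp.norm_le_of_forall_sum_le (by norm_num) (by positivity)
      intro s
      have := rm_finset_bound τ w hinj hC hw f s
      simp only [ENNReal.toReal_ofNat]
      calc ∑ i ∈ s, ‖rmFun τ w (f : ι → ℂ) i‖ ^ (2:ℝ)
          = ∑ i ∈ s, ‖rmFun τ w (f : ι → ℂ) i‖ ^ 2 := by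
            refine Finset.sum_congr rfl fun i _ => rpow_two_eq _
        _ ≤ (C * ‖f‖) ^ 2 := this
        _ = (C * ‖f‖) ^ (2:ℝ) := (rpow_two_eq _).symm)

lemma rmCLM_apply (τ : ι → ι) (w : ι → ℂ) (hinj) {C : ℝ} (hC : 0 ≤ C) (hw) (f : Hsp ι)
    (y : ι) : ((rmCLM τ w hinj hC hw f : Hsp ι) : ι → ℂ) y = w y * (f : ι → ℂ) (τ y) := rfl

lemma norm_rmCLM_le (τ : ι → ι) (w : ι → ℂ) (hinj) {C : ℝ} (hC : 0 ≤ C) (hw) :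
    ‖rmCLM τ w hinj hC hw‖ ≤ C :=
  LinearMap.mkContinuous_norm_le _ hC _


open scoped ComplexInnerProductSpace

/-- basis vector -/
def bv (x : ι) : Hsp ι := lp.single 2 x 1

lemma bv_coord (x j : ι) : ((bv x : Hsp ι) : ι → ℂ) j = if j = x then 1 else 0 := by
  rw [bv, lp.single_apply]
  split
  · next h => subst h; simp
  · next h => simp [Pi.single_apply, h]

lemma ext_singles {S T : Hsp ι →L[ℂ] Hsp ι}
    (h : ∀ x, S (bv x) = T (bv x)) : S = T := by
  refine ContinuousLinearMap.ext fun f => ?_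
  have hf : HasSum (fun i => lp.single 2 i ((f : ι → ℂ) i)) f :=
    lp.hasSum_single (by norm_num) f
  have h1 : ∀ i, S (lp.single 2 i ((f : ι → ℂ) i)) = T (lp.single 2 i ((f : ι → ℂ) i)) := by
    intro i
    have e1 : lp.single 2 i ((f : ι → ℂ) i) = ((f : ι → ℂ) i) • (bv i : Hsp ι) := by
      rw [bv, ← lp.single_smul, smul_eq_mul, mul_one]
    rw [e1, map_smul, map_smul, h i]
  have hS := hf.mapL S
  have hT := hf.mapL T
  rw [funext h1] at hS
  exact hS.unique hT

lemma inner_bv (g : Hsp ι) (j : ι) : ⟪(bv j : Hsp ι), g⟫ = (g : ι → ℂ) j := by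
  rw [bv, lp.inner_single_left]
  simp [RCLike.inner_apply]

lemma star_coord (T : Hsp ι →L[ℂ] Hsp ι) (x y : ι) :
    (((star T) (bv x) : Hsp ι) : ι → ℂ) y = conj (((T (bv y) : Hsp ι) : ι → ℂ) x) := by
  rw [← inner_bv ((star T) (bv x)) y, ContinuousLinearMap.star_eq_adjoint,
    ContinuousLinearMap.adjoint_inner_right, ← inner_conj_symm, inner_bv]


section Pack

variable (σ τ : ι → ι) (χ : ι → Bool)

/-- weight of the forward shift as a reindexing operator -/
def shW (w : ι → ℂ) : ι → ℂ := fun y => if χ y then w (τ y) else 0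

lemma shW_bound (w : ι → ℂ) {C : ℝ} (hC : 0 ≤ C) (hw : ∀ i, ‖w i‖ ≤ C) :
    ∀ y, ‖shW τ χ w y‖ ≤ C := by
  intro y
  rw [shW]
  split
  · exact hw _
  · simpa using hC

lemma shW_inj (hστ : ∀ y, χ y → σ (τ y) = y) (w : ι → ℂ) :
    ∀ y z, shW τ χ w y ≠ 0 → shW τ χ w z ≠ 0 → τ y = τ z → y = z := by
  intro y z hy hz h
  have hy' : χ y := by by_contra hc; rw [shW, if_neg hc] at hy; exact hy rfl
  have hz' : χ z := by by_contra hc; rw [shW, if_neg hc] at hz; exact hz rfl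
  rw [← hστ y hy', ← hστ z hz', h]

lemma co_inj (hτσ : ∀ z, τ (σ z) = z) (w : ι → ℂ) :
    ∀ y z, star w y ≠ 0 → star w z ≠ 0 → σ y = σ z → y = z := by
  intro y z _ _ h
  rw [← hτσ y, ← hτσ z, h]

/-- forward weighted shift: `bv x ↦ w x • bv (σ x)` -/
def shOp (hστ : ∀ y, χ y → σ (τ y) = y) (w : ι → ℂ) {C : ℝ} (hC : 0 ≤ C)
    (hw : ∀ i, ‖w i‖ ≤ C) : Hsp ι →L[ℂ] Hsp ι :=
  rmCLM τ (shW τ χ w) (shW_inj σ τ χ hστ w) hC (shW_bound τ χ w hC hw)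

/-- backward weighted shift (adjoint of `shOp`) -/
def coOp (hτσ : ∀ z, τ (σ z) = z) (w : ι → ℂ) {C : ℝ} (hC : 0 ≤ C)
    (hw : ∀ i, ‖w i‖ ≤ C) : Hsp ι →L[ℂ] Hsp ι :=
  rmCLM σ (star w) (co_inj σ τ hτσ w) hC (fun i => by simpa using hw i)

lemma shOp_apply (hστ : ∀ y, χ y → σ (τ y) = y) (w : ι → ℂ) {C : ℝ} (hC : 0 ≤ C)
    (hw : ∀ i, ‖w i‖ ≤ C) (f : Hsp ι) (y : ι) :
    ((shOp σ τ χ hστ w hC hw f : Hsp ι) : ι → ℂ) y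
      = if χ y then w (τ y) * (f : ι → ℂ) (τ y) else 0 := by
  rw [shOp, rmCLM_apply, shW, ite_mul, zero_mul]

lemma coOp_apply (hτσ : ∀ z, τ (σ z) = z) (w : ι → ℂ) {C : ℝ} (hC : 0 ≤ C)
    (hw : ∀ i, ‖w i‖ ≤ C) (f : Hsp ι) (y : ι) :
    ((coOp σ τ hτσ w hC hw f : Hsp ι) : ι → ℂ) y = conj (w y) * (f : ι → ℂ) (σ y) := by
  rw [coOp, rmCLM_apply]
  rfl

lemma shOp_single (hτσ : ∀ z, τ (σ z) = z) (hχσ : ∀ z, χ (σ z))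
    (hστ : ∀ y, χ y → σ (τ y) = y) (w : ι → ℂ) {C : ℝ} (hC : 0 ≤ C)
    (hw : ∀ i, ‖w i‖ ≤ C) (x : ι) :
    shOp σ τ χ hστ w hC hw (bv x) = w x • (bv (σ x) : Hsp ι) := by
  apply lp.ext
  funext y
  rw [shOp_apply σ τ χ hστ]
  simp only [lp.coeFn_smul, Pi.smul_apply, smul_eq_mul, bv_coord]
  by_cases hy : y = σ x
  · subst hy
    rw [if_pos rfl, if_pos (hχσ x), hτσ x, if_pos rfl]
  · rw [if_neg hy, mul_zero]
    split
    · next hχy =>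
      rw [if_neg (show τ y ≠ x from fun hτy => hy (by rw [← hστ y hχy, hτy])), mul_zero]
    · rfl

lemma coOp_single (hτσ : ∀ z, τ (σ z) = z) (hχσ : ∀ z, χ (σ z))
    (hστ : ∀ y, χ y → σ (τ y) = y) (w : ι → ℂ) {C : ℝ} (hC : 0 ≤ C)
    (hw : ∀ i, ‖w i‖ ≤ C) (x : ι) :
    coOp σ τ hτσ w hC hw (bv x)
      = if χ x then conj (w (τ x)) • (bv (τ x) : Hsp ι) else 0 := by
  apply lp.ext
  funext y
  rw [coOp_apply σ τ hτσ]
  by_cases hx : χ x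
  · rw [if_pos hx, lp.coeFn_smul, Pi.smul_apply, smul_eq_mul, bv_coord, bv_coord]
    by_cases hy : y = τ x
    · subst hy
      rw [if_pos (hστ x hx), if_pos rfl]
    · rw [if_neg hy, mul_zero]
      have hne : σ y ≠ x := fun h => hy (by rw [← h, hτσ])
      rw [if_neg hne, mul_zero]
  · rw [if_neg hx, bv_coord]
    have hne : σ y ≠ x := fun h => hx (h ▸ hχσ y)
    rw [if_neg hne, mul_zero]
    have hz : ((0 : Hsp ι) : ι → ℂ) y = 0 := rfl
    rw [hz]

lemma star_shOp (hτσ : ∀ z, τ (σ z) = z) (hχσ : ∀ z, χ (σ z))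
    (hστ : ∀ y, χ y → σ (τ y) = y) (w : ι → ℂ) {C : ℝ} (hC : 0 ≤ C)
    (hw : ∀ i, ‖w i‖ ≤ C) :
    star (shOp σ τ χ hστ w hC hw) = coOp σ τ hτσ w hC hw := by
  apply ext_singles
  intro x
  apply lp.ext
  funext y
  rw [star_coord, shOp_single σ τ χ hτσ hχσ hστ, coOp_apply σ τ hτσ]
  simp only [lp.coeFn_smul, Pi.smul_apply, smul_eq_mul, bv_coord]
  by_cases h : σ y = x
  · rw [if_pos h, if_pos h.symm, mul_one, mul_one]
  · rw [if_neg h, if_neg (fun hh => h hh.symm), mul_zero, mul_zero, map_zero]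

lemma star_coOp (hτσ : ∀ z, τ (σ z) = z) (hχσ : ∀ z, χ (σ z))
    (hστ : ∀ y, χ y → σ (τ y) = y) (w : ι → ℂ) {C : ℝ} (hC : 0 ≤ C)
    (hw : ∀ i, ‖w i‖ ≤ C) :
    star (coOp σ τ hτσ w hC hw) = shOp σ τ χ hστ w hC hw := by
  rw [← star_shOp σ τ χ hτσ hχσ hστ, star_star]

end Pack

section Diag

/-- diagonal operator -/
def dgOp (u : ι → ℂ) {C : ℝ} (hC : 0 ≤ C) (hw : ∀ i, ‖u i‖ ≤ C) : Hsp ι →L[ℂ] Hsp ι :=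
  rmCLM id u (fun y z _ _ h => h) hC hw

lemma dgOp_apply (u : ι → ℂ) {C : ℝ} (hC : 0 ≤ C) (hw : ∀ i, ‖u i‖ ≤ C) (f : Hsp ι) (y : ι) :
    ((dgOp u hC hw f : Hsp ι) : ι → ℂ) y = u y * (f : ι → ℂ) y := rfl

lemma dgOp_single (u : ι → ℂ) {C : ℝ} (hC : 0 ≤ C) (hw : ∀ i, ‖u i‖ ≤ C) (x : ι) :
    dgOp u hC hw (bv x) = u x • (bv x : Hsp ι) := by
  apply lp.ext
  funext y
  rw [dgOp_apply]
  simp only [lp.coeFn_smul, Pi.smul_apply, smul_eq_mul, bv_coord]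
  by_cases hy : y = x
  · subst hy; rfl
  · rw [if_neg hy, mul_zero, mul_zero]

lemma star_dgOp (u : ι → ℂ) {C : ℝ} (hC : 0 ≤ C) (hw : ∀ i, ‖u i‖ ≤ C)
    (hw' : ∀ i, ‖star u i‖ ≤ C) :
    star (dgOp u hC hw) = dgOp (star u) hC hw' := by
  apply ext_singles
  intro x
  apply lp.ext
  funext y
  rw [star_coord, dgOp_single, dgOp_apply]
  simp only [lp.coeFn_smul, Pi.smul_apply, smul_eq_mul, bv_coord, Pi.star_apply]
  by_cases h : y = x
  · subst h; simp
  · rw [if_neg h, if_neg (fun hh => h hh.symm), mul_zero, mul_zero, map_zero]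

end Diag

section OpCalc

variable (σ τ : ι → ι) (χ : ι → Bool)

/-- `T` is the diagonal operator with weight `u` (pointwise characterization). -/
def IsDg (T : Hsp ι →L[ℂ] Hsp ι) (u : ι → ℂ) : Prop :=
  ∀ (f : Hsp ι) (y : ι), ((T f : Hsp ι) : ι → ℂ) y = u y * (f : ι → ℂ) y

/-- `T` is the forward weighted shift with weight `w` (pointwise characterization). -/
def IsSh (T : Hsp ι →L[ℂ] Hsp ι) (w : ι → ℂ) : Prop :=
  ∀ (f : Hsp ι) (y : ι),
    ((T f : Hsp ι) : ι → ℂ) y = if χ y then w (τ y) * (f : ι → ℂ) (τ y) else 0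

lemma isDg_dgOp (u : ι → ℂ) {C : ℝ} (hC : 0 ≤ C) (hw : ∀ i, ‖u i‖ ≤ C) :
    IsDg (dgOp u hC hw) u := fun _ _ => rfl

lemma isSh_shOp (hστ : ∀ y, χ y → σ (τ y) = y) (w : ι → ℂ) {C : ℝ} (hC : 0 ≤ C)
    (hw : ∀ i, ‖w i‖ ≤ C) : IsSh τ χ (shOp σ τ χ hστ w hC hw) w :=
  fun f y => shOp_apply σ τ χ hστ w hC hw f y

lemma IsDg.congr {T : Hsp ι →L[ℂ] Hsp ι} {u u' : ι → ℂ} (h : IsDg T u)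
    (h' : ∀ y, u y = u' y) : IsDg T u' := by
  intro f y; rw [h f y, h' y]

lemma IsSh.congr {T : Hsp ι →L[ℂ] Hsp ι} {w w' : ι → ℂ} (h : IsSh τ χ T w)
    (h' : ∀ y, w y = w' y) : IsSh τ χ T w' := by
  intro f y; rw [h f y, h' (τ y)]

lemma IsDg.mul {T S : Hsp ι →L[ℂ] Hsp ι} {u v : ι → ℂ} (hT : IsDg T u) (hS : IsDg S v) :
    IsDg (T * S) (fun y => u y * v y) := by
  intro f y
  rw [ContinuousLinearMap.mul_apply, hT, hS, mul_assoc]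

lemma IsDg.add {T S : Hsp ι →L[ℂ] Hsp ι} {u v : ι → ℂ} (hT : IsDg T u) (hS : IsDg S v) :
    IsDg (T + S) (fun y => u y + v y) := by
  intro f y
  rw [ContinuousLinearMap.add_apply, lp.coeFn_add, Pi.add_apply, hT, hS, add_mul]

lemma IsDg.sub {T S : Hsp ι →L[ℂ] Hsp ι} {u v : ι → ℂ} (hT : IsDg T u) (hS : IsDg S v) :
    IsDg (T - S) (fun y => u y - v y) := by
  intro f y
  rw [ContinuousLinearMap.sub_apply, lp.coeFn_sub, Pi.sub_apply, hT, hS, sub_mul]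

lemma IsDg.smul {T : Hsp ι →L[ℂ] Hsp ι} {u : ι → ℂ} (hT : IsDg T u) (c : ℂ) :
    IsDg (c • T) (fun y => c * u y) := by
  intro f y
  rw [ContinuousLinearMap.smul_apply, lp.coeFn_smul, Pi.smul_apply, smul_eq_mul, hT, mul_assoc]

lemma isDg_one : IsDg (1 : Hsp ι →L[ℂ] Hsp ι) (fun _ => 1) := by
  intro f y
  rw [ContinuousLinearMap.one_apply, one_mul]

lemma IsDg.pow {T : Hsp ι →L[ℂ] Hsp ι} {u : ι → ℂ} (hT : IsDg T u) (n : ℕ) :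
    IsDg (T ^ n) (fun y => u y ^ n) := by
  induction n with
  | zero => simpa using isDg_one
  | succ n ih =>
      have := ih.mul hT
      rw [← pow_succ] at this
      exact this.congr (fun y => by rw [← pow_succ])

lemma IsDg.aeval {T : Hsp ι →L[ℂ] Hsp ι} {u : ι → ℂ} (hT : IsDg T u) (P : Polynomial ℂ) :
    IsDg (Polynomial.aeval T P) (fun y => Polynomial.eval (u y) P) := by
  induction P using Polynomial.induction_on' with
  | add p q hp hq =>
      have h3 := hp.add hq
      rw [← map_add] at h3
      exact h3.congr (fun y => by rw [Polynomial.eval_add])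
  | monomial n c =>
      have h1 : IsDg ((Polynomial.aeval T) ((Polynomial.monomial n) c))
          (fun y => c * u y ^ n) := by
        rw [Polynomial.aeval_monomial, Algebra.algebraMap_eq_smul_one,
          smul_mul_assoc, one_mul]
        exact (hT.pow n).smul c
      exact h1.congr (fun y => by rw [Polynomial.eval_monomial])

lemma IsSh.mul_dg {T S : Hsp ι →L[ℂ] Hsp ι} {w u : ι → ℂ} (hT : IsSh τ χ T w)
    (hS : IsDg S u) : IsSh τ χ (T * S) (fun y => w y * u y) := by
  intro f y
  rw [ContinuousLinearMap.mul_apply, hT]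
  split
  · rw [hS, mul_assoc]
  · rfl

lemma IsSh.sub {T S : Hsp ι →L[ℂ] Hsp ι} {w v : ι → ℂ} (hT : IsSh τ χ T w)
    (hS : IsSh τ χ S v) : IsSh τ χ (T - S) (fun y => w y - v y) := by
  intro f y
  rw [ContinuousLinearMap.sub_apply, lp.coeFn_sub, Pi.sub_apply, hT, hS]
  split
  · rw [sub_mul]
  · rw [sub_zero]

/-- key computation: `(coOp w) * (shOp v)` is diagonal. -/
lemma isDg_co_mul_sh (hτσ : ∀ z, τ (σ z) = z) (hχσ : ∀ z, χ (σ z))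
    (hστ : ∀ y, χ y → σ (τ y) = y) (w v : ι → ℂ) {C C' : ℝ} (hC : 0 ≤ C) (hC' : 0 ≤ C')
    (hw : ∀ i, ‖w i‖ ≤ C) (hv : ∀ i, ‖v i‖ ≤ C') :
    IsDg ((coOp σ τ hτσ w hC hw) * (shOp σ τ χ hστ v hC' hv))
      (fun y => conj (w y) * v y) := by
  intro f y
  rw [ContinuousLinearMap.mul_apply, coOp_apply σ τ hτσ, shOp_apply σ τ χ hστ,
    if_pos (hχσ y), hτσ y, mul_assoc]

/-- key computation: `(shOp v) * (coOp w)` is diagonal. -/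
lemma isDg_sh_mul_co (hτσ : ∀ z, τ (σ z) = z) (hχσ : ∀ z, χ (σ z))
    (hστ : ∀ y, χ y → σ (τ y) = y) (w v : ι → ℂ) {C C' : ℝ} (hC : 0 ≤ C) (hC' : 0 ≤ C')
    (hw : ∀ i, ‖w i‖ ≤ C) (hv : ∀ i, ‖v i‖ ≤ C') :
    IsDg ((shOp σ τ χ hστ v hC' hv) * (coOp σ τ hτσ w hC hw))
      (fun y => if χ y then v (τ y) * conj (w (τ y)) else 0) := by
  intro f y
  rw [ContinuousLinearMap.mul_apply, shOp_apply σ τ χ hστ, ite_mul, zero_mul]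
  by_cases hy : χ y
  · rw [if_pos hy, if_pos hy, coOp_apply σ τ hτσ, hστ y hy, mul_assoc]
  · rw [if_neg hy, if_neg hy]

/-- norm bound for a diagonal-plus-shift operator. -/
lemma norm_le_mixed (hστ : ∀ y, χ y → σ (τ y) = y) (T : Hsp ι →L[ℂ] Hsp ι)
    (u w : ι → ℂ) {Cu Cw : ℝ} (hCu : 0 ≤ Cu) (hCw : 0 ≤ Cw)
    (hu : ∀ i, ‖u i‖ ≤ Cu) (hwb : ∀ i, ‖w i‖ ≤ Cw)
    (h : ∀ (f : Hsp ι) (y : ι), ((T f : Hsp ι) : ι → ℂ) y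
        = u y * (f : ι → ℂ) y + (if χ y then w (τ y) * (f : ι → ℂ) (τ y) else 0)) :
    ‖T‖ ≤ Cu + Cw := by
  have hTeq : T = dgOp u hCu hu + shOp σ τ χ hστ w hCw hwb := by
    refine ContinuousLinearMap.ext fun f => ?_
    apply lp.ext
    funext y
    rw [h, ContinuousLinearMap.add_apply, lp.coeFn_add, Pi.add_apply,
      dgOp_apply, shOp_apply σ τ χ hστ]
  rw [hTeq]
  refine (norm_add_le _ _).trans (add_le_add ?_ ?_)
  · exact norm_rmCLM_le _ _ _ hCu _
  · exact norm_rmCLM_le _ _ _ hCw _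

end OpCalc

lemma mem_of_aeval {S : StarSubalgebra ℂ (Hsp ι →L[ℂ] Hsp ι)}
    {M : Hsp ι →L[ℂ] Hsp ι} (hM : M ∈ S) (P : Polynomial ℂ) :
    Polynomial.aeval M P ∈ S := by
  have h1 : Polynomial.aeval M P ∈ Algebra.adjoin ℂ {M} :=
    Polynomial.aeval_mem_adjoin_singleton ℂ M
  have h2 : Algebra.adjoin ℂ {M} ≤ S.toSubalgebra :=
    Algebra.adjoin_le (by simpa using hM)
  exact h2 h1

section Concrete

/-- index set -/
abbrev Idx (n : ℕ) := ℤ × (Fin n → ℕ)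

variable {n : ℕ} (l : Fin n)

/-- sum of the coordinates before `l` -/
def Sm (a : Fin n → ℕ) : ℕ := ∑ i ∈ Finset.Iio l, a i

def σc : Idx n → Idx n := fun z => (z.1 + 1, z.2 + Pi.single l 1)
def τc : Idx n → Idx n := fun z => (z.1 - 1, Function.update z.2 l (z.2 l - 1))
def χc : Idx n → Bool := fun z => decide (1 ≤ z.2 l)

lemma σc_snd_l (a : Fin n → ℕ) : (a + Pi.single l 1 : Fin n → ℕ) l = a l + 1 := by
  simp [Pi.add_apply]

lemma hτσc : ∀ z : Idx n, τc l (σc l z) = z := by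
  rintro ⟨m, a⟩
  refine Prod.ext ?_ ?_
  · simp [σc, τc]
  · funext i
    by_cases hi : i = l
    · subst hi
      simp [σc, τc]
    · simp [σc, τc, Function.update_of_ne hi, Pi.single_eq_of_ne hi]

lemma hχσc : ∀ z : Idx n, χc l (σc l z) := by
  rintro ⟨m, a⟩
  simp [σc, χc]

lemma hστc : ∀ y : Idx n, χc l y → σc l (τc l y) = y := by
  rintro ⟨m, a⟩ hy
  simp only [χc, decide_eq_true_eq] at hy
  refine Prod.ext ?_ ?_
  · simp [σc, τc]
  · funext i
    by_cases hi : i = l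
    · subst hi
      simp only [σc, τc, Pi.add_apply, Function.update_self, Pi.single_eq_same]
      omega
    · simp [σc, τc, Function.update_of_ne hi, Pi.single_eq_of_ne hi]

lemma Sm_add_single (a : Fin n → ℕ) : Sm l ((a + Pi.single l 1 : Fin n → ℕ)) = Sm l a := by
  refine Finset.sum_congr rfl fun i hi => ?_
  rw [Finset.mem_Iio] at hi
  simp [Pi.single_eq_of_ne (ne_of_lt hi)]

lemma Sm_update (a : Fin n → ℕ) (j : ℕ) : Sm l (Function.update a l j) = Sm l a := by
  refine Finset.sum_congr rfl fun i hi => ?_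
  rw [Finset.mem_Iio] at hi
  rw [Function.update_of_ne (ne_of_lt hi)]

lemma Sm_eq_zero_iff (a : Fin n → ℕ) : Sm l a = 0 ↔ ∀ i : Fin n, i < l → a i = 0 := by
  rw [Sm, Finset.sum_eq_zero_iff]
  constructor
  · intro h i hi
    exact h i (Finset.mem_Iio.mpr hi)
  · intro h i hi
    exact h i (Finset.mem_Iio.mp hi)

lemma eq_zero_iff (hl : ∀ i : Fin n, i ≤ l) (a : Fin n → ℕ) :
    a = 0 ↔ Sm l a = 0 ∧ a l = 0 := by
  constructor
  · rintro rfl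
    simp [Sm]
  · rintro ⟨h1, h2⟩
    funext i
    rcases lt_or_eq_of_le (hl i) with hi | hi
    · exact (Sm_eq_zero_iff l a).mp h1 i hi
    · rw [hi]; exact h2

end Concrete

section Master

variable {n : ℕ}

/-- the weight of the generator `x_{k-1}` -/
def wXc (q : ℝ) (l : Fin n) : Idx n → ℂ :=
  fun z => ((q ^ Sm l z.2 * Real.sqrt (1 - q ^ (2 * z.2 l + 2)) : ℝ) : ℂ)

set_option maxHeartbeats 1000000 in
theorem master (l : Fin n) (hl : ∀ i : Fin n, i ≤ l) {q : ℝ}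
    (hq0 : 0 < q) (hq1 : q < 1) (X V : Hsp (Idx n) →L[ℂ] Hsp (Idx n))
    (hX : ∀ z : Idx n, X (bv z) = wXc q l z • (bv (σc l z) : Hsp (Idx n)))
    (hV : ∀ z : Idx n, V (bv z)
        = if Sm l z.2 = 0 then (bv (σc l z) : Hsp (Idx n)) else bv z) :
    (∀ ε > 0, ∃ b ∈ StarAlgebra.adjoin ℂ ({X} : Set (Hsp (Idx n) →L[ℂ] Hsp (Idx n))),
      ‖V - b‖ < ε) ∧
    star V * V = 1 ∧
    (∀ z : Idx n, ((1 - V * star V) (bv z) : Hsp (Idx n))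
        = if z.2 = 0 then (bv z : Hsp (Idx n)) else 0) := by
  have h01 : (0:ℝ) ≤ 1 := by norm_num
  -- the diagonal and shift weights of V
  set vd : Idx n → ℂ := fun z => if Sm l z.2 = 0 then (0:ℂ) else 1 with hvd_def
  set vs : Idx n → ℂ := fun z => if Sm l z.2 = 0 then (1:ℂ) else 0 with hvs_def
  have hvd : ∀ z, ‖vd z‖ ≤ 1 := by
    intro z; rw [hvd_def]; dsimp only; split <;> simp
  have hvs : ∀ z, ‖vs z‖ ≤ 1 := by
    intro z; rw [hvs_def]; dsimp only; split <;> simp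
  have hsvd : ∀ z, ‖star vd z‖ ≤ 1 := fun z => by simpa using hvd z
  have hVop : V = dgOp vd h01 hvd
      + shOp (σc l) (τc l) (χc l) (hστc l) vs h01 hvs := by
    apply ext_singles
    intro z
    rw [hV z, ContinuousLinearMap.add_apply, dgOp_single,
      shOp_single (σc l) (τc l) (χc l) (hτσc l) (hχσc l) (hστc l)]
    by_cases h : Sm l z.2 = 0
    · rw [if_pos h, hvd_def, hvs_def]
      dsimp only
      rw [if_pos h, if_pos h, zero_smul, one_smul, zero_add]
    · rw [if_neg h, hvd_def, hvs_def]
      dsimp only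
      rw [if_neg h, if_neg h, zero_smul, one_smul, add_zero]
  have hVstar : star V = dgOp (star vd) h01 hsvd
      + coOp (σc l) (τc l) (hτσc l) vs h01 hvs := by
    rw [hVop, star_add, star_dgOp vd h01 hvd hsvd,
      star_shOp (σc l) (τc l) (χc l) (hτσc l) (hχσc l) (hστc l) vs h01 hvs]
  -- values of the weights
  have hvdσ : ∀ z : Idx n, Sm l z.2 = 0 → star vd (σc l z) = 0 := by
    intro z h
    rw [Pi.star_apply, hvd_def]
    dsimp only
    rw [σc, Sm_add_single, if_pos h]
    exact star_zero ℂ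
  have hvsτ0 : ∀ z : Idx n, Sm l z.2 = 0 → vs (τc l z) = 1 := by
    intro z h
    rw [hvs_def]
    dsimp only
    rw [τc, Sm_update, if_pos h]
  have hvsτ1 : ∀ z : Idx n, Sm l z.2 ≠ 0 → vs (τc l z) = 0 := by
    intro z h
    rw [hvs_def]
    dsimp only
    rw [τc, Sm_update, if_neg h]
  -- the computation of `star V (bv z)`
  have hsVz : ∀ z : Idx n, star V (bv z) =
      (if Sm l z.2 = 0 then (0:Hsp (Idx n)) else bv z)
        + (if χc l z then vs (τc l z) • (bv (τc l z) : Hsp (Idx n)) else 0) := by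
    intro z
    rw [hVstar, ContinuousLinearMap.add_apply, dgOp_single,
      coOp_single (σc l) (τc l) (χc l) (hτσc l) (hχσc l) (hστc l)]
    congr 1
    · by_cases h : Sm l z.2 = 0
      · rw [if_pos h, Pi.star_apply, hvd_def]
        dsimp only
        rw [if_pos h, star_zero, zero_smul]
      · rw [if_neg h, Pi.star_apply, hvd_def]
        dsimp only
        rw [if_neg h, star_one, one_smul]
    · by_cases hχ : χc l z
      · rw [if_pos hχ, if_pos hχ]
        congr 1
        by_cases h : Sm l z.2 = 0
        · rw [hvsτ0 z h, map_one]
        · rw [hvsτ1 z h, map_zero]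
      · rw [if_neg hχ, if_neg hχ]
  have goal2 : star V * V = 1 := by
    apply ext_singles
    intro z
    rw [ContinuousLinearMap.mul_apply, hV z, ContinuousLinearMap.one_apply]
    by_cases h : Sm l z.2 = 0
    · rw [if_pos h, hsVz (σc l z)]
      have h1 : Sm l (σc l z).2 = Sm l z.2 := by rw [σc]; exact Sm_add_single l z.2
      rw [if_pos (by rw [h1]; exact h), if_pos (hχσc l z), hτσc l z, zero_add, hvs_def]
      dsimp only
      rw [if_pos h, one_smul]
    · rw [if_neg h, hsVz z, if_neg h]
      by_cases hχ : χc l z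
      · rw [if_pos hχ, hvsτ1 z h, zero_smul, add_zero]
      · rw [if_neg hχ, add_zero]
  have hSm0 : Sm l (0 : Fin n → ℕ) = 0 := by simp [Sm]
  have goal3 : ∀ z : Idx n, ((1 - V * star V) (bv z) : Hsp (Idx n))
      = if z.2 = 0 then (bv z : Hsp (Idx n)) else 0 := by
    intro z
    rw [ContinuousLinearMap.sub_apply, ContinuousLinearMap.one_apply,
      ContinuousLinearMap.mul_apply, hsVz z]
    by_cases h : Sm l z.2 = 0
    · by_cases hχ : χc l z
      · -- `z.2 l ≥ 1`, so `z.2 ≠ 0`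
        have hzl : 1 ≤ z.2 l := by simpa [χc] using hχ
        have hz2 : z.2 ≠ 0 := by
          intro h0
          rw [h0] at hzl
          simp at hzl
        rw [if_pos h, if_pos hχ, hvsτ0 z h, one_smul, zero_add, hV (τc l z)]
        have hSτ : Sm l (τc l z).2 = 0 := by
          rw [τc, Sm_update]; exact h
        rw [if_pos hSτ, hστc l z hχ, sub_self, if_neg hz2]
      · -- `z.2 = 0`
        have hzl : z.2 l = 0 := by
          by_contra hzl
          exact hχ (by simp [χc]; omega)
        have hz2 : z.2 = 0 := by
          rw [eq_zero_iff l hl]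
          exact ⟨h, hzl⟩
        rw [if_pos h, if_neg hχ, add_zero, map_zero, sub_zero, if_pos hz2]
    · have hz2 : z.2 ≠ 0 := fun h0 => h (by rw [h0]; exact hSm0)
      rw [if_neg h]
      by_cases hχ : χc l z
      · rw [if_pos hχ, hvsτ1 z h, zero_smul, add_zero, hV z, if_neg h, sub_self, if_neg hz2]
      · rw [if_neg hχ, add_zero, hV z, if_neg h, sub_self, if_neg hz2]
  refine ⟨?_, goal2, goal3⟩
  -- ===== goal 1 : approximation =====
  intro ε hε
  have hq2 : q^2 < 1 := pow_lt_one₀ hq0.le hq1 two_ne_zero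
  have hδ : 0 < 1 - q^2 := by linarith
  have hple1 : ∀ j : ℕ, q ^ j ≤ 1 := fun j => pow_le_one₀ hq0.le hq1.le
  have hpnn : ∀ j : ℕ, (0:ℝ) ≤ q ^ j := fun j => by positivity
  -- Weierstrass approximation of t ↦ 1/√t on [1-q², 1]
  have hcont : ContinuousOn (fun s : ℝ => (Real.sqrt s)⁻¹) (Set.Icc (1 - q^2) 1) := by
    apply ContinuousOn.inv₀
    · exact Real.continuous_sqrt.continuousOn
    · intro s hs
      have hs0 : 0 < s := lt_of_lt_of_le hδ hs.1
      exact ne_of_gt (Real.sqrt_pos.mpr hs0)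
  obtain ⟨p, hp⟩ := exists_polynomial_near_of_continuousOn (1 - q^2) 1 _ hcont (ε/3)
    (by positivity)
  -- bound for p on [0,1]
  obtain ⟨M0, hM0⟩ := IsCompact.exists_bound_of_continuousOn (isCompact_Icc (a := (0:ℝ)) (b := 1))
    (Polynomial.continuous p).continuousOn
  set M : ℝ := max M0 0 with hM_def
  have hMnn : 0 ≤ M := le_max_right _ _
  have hM : ∀ s ∈ Set.Icc (0:ℝ) 1, |Polynomial.eval s p| ≤ M := by
    intro s hs
    have := hM0 s hs
    rw [Real.norm_eq_abs] at this
    exact this.trans (le_max_left _ _)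
  -- choice of the power m
  obtain ⟨N, hN⟩ := exists_pow_lt_of_lt_one
    (show (0:ℝ) < min (1/2) (ε/(6*(M+1))) by positivity) hq1
  set m : ℕ := N + 1 with hm_def
  set t : ℝ := q^(2*m) with ht_def
  have ht_pos : 0 < t := pow_pos hq0 _
  have htN : t ≤ q^N := by
    rw [ht_def]
    exact pow_le_pow_of_le_one hq0.le hq1.le (by omega)
  have ht_half : t ≤ 1/2 := htN.trans (le_of_lt (lt_of_lt_of_le hN (min_le_left _ _)))
  have ht_eps : t ≤ ε/(6*(M+1)) := htN.trans (le_of_lt (lt_of_lt_of_le hN (min_le_right _ _)))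
  have h1t : 0 < 1 - t := by linarith
  set η : ℝ := t / (1 - t) with hη_def
  have hη_nn : 0 ≤ η := by positivity
  have hη1 : η ≤ 1 := by rw [hη_def, div_le_one h1t]; linarith
  have hηM : η * (1 + M) ≤ ε/3 := by
    have h2t : η ≤ 2 * t := by
      rw [hη_def, div_le_iff₀ h1t]; nlinarith
    have h3 : 2 * t * (1 + M) ≤ ε / 3 := by
      have h4 := mul_le_mul_of_nonneg_right ht_eps (show (0:ℝ) ≤ 2*(1+M) by linarith)
      calc 2 * t * (1 + M) = t * (2 * (1+M)) := by ring
        _ ≤ ε/(6*(M+1)) * (2*(1+M)) := h4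
        _ = ε/3 := by field_simp; ring
    nlinarith
  -- the scalar weight functions
  have hα0 : ((q^(2*0))^m - t)/(1-t) = 1 := by
    norm_num
    exact ne_of_gt h1t
  have hαb : ∀ s : ℕ, 1 ≤ s → |((q^(2*s))^m - t)/(1-t)| ≤ η := by
    intro s hs
    rw [abs_div, abs_of_pos h1t, hη_def]
    gcongr
    have h1 : (q^(2*s))^m ≤ t := by
      rw [← pow_mul, ht_def]
      exact pow_le_pow_of_le_one hq0.le hq1.le (mul_le_mul_left (by omega : 2 ≤ 2*s) m)
    have h2 : (0:ℝ) ≤ (q^(2*s))^m := by positivity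
    rw [abs_le]
    constructor <;> linarith
  -- ===== the operators =====
  have hwX1 : ∀ z : Idx n, ‖wXc q l z‖ ≤ 1 := by
    intro z
    rw [wXc, Complex.norm_real, Real.norm_eq_abs]
    have h1 : (0:ℝ) ≤ q ^ Sm l z.2 := hpnn _
    have h2 : (0:ℝ) ≤ Real.sqrt (1 - q ^ (2 * z.2 l + 2)) := Real.sqrt_nonneg _
    rw [abs_of_nonneg (mul_nonneg h1 h2)]
    have h4 : Real.sqrt (1 - q ^ (2 * z.2 l + 2)) ≤ 1 := by
      have := hpnn (2 * z.2 l + 2)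
      calc Real.sqrt (1 - q ^ (2 * z.2 l + 2)) ≤ Real.sqrt 1 :=
            Real.sqrt_le_sqrt (by linarith)
        _ = 1 := Real.sqrt_one
    calc q ^ Sm l z.2 * Real.sqrt (1 - q ^ (2 * z.2 l + 2)) ≤ 1 * 1 :=
          mul_le_mul (hple1 _) h4 h2 (by norm_num)
      _ = 1 := by norm_num
  have hXop : X = shOp (σc l) (τc l) (χc l) (hστc l) (wXc q l) h01 hwX1 := by
    apply ext_singles
    intro z
    rw [hX z, shOp_single (σc l) (τc l) (χc l) (hτσc l) (hχσc l) (hστc l)]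
  have hXsh : IsSh (τc l) (χc l) X (wXc q l) := by
    rw [hXop]
    exact isSh_shOp (σc l) (τc l) (χc l) (hστc l) (wXc q l) h01 hwX1
  have hstarX : star X = coOp (σc l) (τc l) (hτσc l) (wXc q l) h01 hwX1 := by
    rw [hXop, star_shOp (σc l) (τc l) (χc l) (hτσc l) (hχσc l) (hστc l)]
  -- star X * X is diagonal
  have sqrt_self : ∀ j : ℕ, Real.sqrt (1 - q ^ j) * Real.sqrt (1 - q ^ j) = 1 - q ^ j := by
    intro j
    exact Real.mul_self_sqrt (by linarith [hpnn j, hple1 j])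
  have hd1 : IsDg (star X * X)
      (fun z : Idx n => ((q ^ (2 * Sm l z.2) * (1 - q ^ (2 * z.2 l + 2)) : ℝ) : ℂ)) := by
    have h := isDg_co_mul_sh (σc l) (τc l) (χc l) (hτσc l) (hχσc l) (hστc l)
      (wXc q l) (wXc q l) h01 h01 hwX1 hwX1
    rw [← hstarX, ← hXop] at h
    refine h.congr fun z => ?_
    rw [wXc, Complex.conj_ofReal, ← Complex.ofReal_mul]
    congr 1
    calc (q ^ Sm l z.2 * Real.sqrt (1 - q ^ (2 * z.2 l + 2)))
          * (q ^ Sm l z.2 * Real.sqrt (1 - q ^ (2 * z.2 l + 2)))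
        = (q ^ Sm l z.2 * q ^ Sm l z.2) * (Real.sqrt (1 - q ^ (2 * z.2 l + 2))
            * Real.sqrt (1 - q ^ (2 * z.2 l + 2))) := by ring
      _ = q ^ (2 * Sm l z.2) * (1 - q ^ (2 * z.2 l + 2)) := by
          rw [sqrt_self, ← pow_add, ← two_mul]
  -- X * star X is diagonal
  have hd2 : IsDg (X * star X)
      (fun z : Idx n => ((q ^ (2 * Sm l z.2) * (1 - q ^ (2 * z.2 l)) : ℝ) : ℂ)) := by
    have h := isDg_sh_mul_co (σc l) (τc l) (χc l) (hτσc l) (hχσc l) (hστc l)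
      (wXc q l) (wXc q l) h01 h01 hwX1 hwX1
    rw [← hstarX, ← hXop] at h
    refine h.congr fun z => ?_
    by_cases hχ : χc l z
    · rw [if_pos hχ]
      have hzl : 1 ≤ z.2 l := by simpa [χc] using hχ
      have hτ2 : (τc l z).2 l = z.2 l - 1 := by simp [τc]
      have hτS : Sm l (τc l z).2 = Sm l z.2 := Sm_update l z.2 _
      rw [wXc, Complex.conj_ofReal, ← Complex.ofReal_mul]
      congr 1
      rw [hτS, hτ2]
      have he : 2 * (z.2 l - 1) + 2 = 2 * z.2 l := by omega
      rw [he]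
      calc (q ^ Sm l z.2 * Real.sqrt (1 - q ^ (2 * z.2 l)))
            * (q ^ Sm l z.2 * Real.sqrt (1 - q ^ (2 * z.2 l)))
          = (q ^ Sm l z.2 * q ^ Sm l z.2) * (Real.sqrt (1 - q ^ (2 * z.2 l))
              * Real.sqrt (1 - q ^ (2 * z.2 l))) := by ring
        _ = q ^ (2 * Sm l z.2) * (1 - q ^ (2 * z.2 l)) := by
            rw [sqrt_self, ← pow_add, ← two_mul]
    · rw [if_neg hχ]
      have hzl : z.2 l = 0 := by
        by_contra hc
        exact hχ (by simp [χc]; omega)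
      rw [hzl]
      norm_num
  -- the diagonal operator D with weight q^(2 Sm)
  set D : Hsp (Idx n) →L[ℂ] Hsp (Idx n) :=
    (((1 - q^2 : ℝ) : ℂ))⁻¹ • (star X * X - ((q^2 : ℝ) : ℂ) • (X * star X)) with hD_def
  have hD : IsDg D (fun z : Idx n => ((q ^ (2 * Sm l z.2) : ℝ) : ℂ)) := by
    have h := (hd1.sub (hd2.smul ((q^2 : ℝ) : ℂ))).smul (((1 - q^2 : ℝ) : ℂ))⁻¹
    refine h.congr fun z => ?_
    have hq2p : q^2 * q^(2 * z.2 l) = q^(2 * z.2 l + 2) := by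
      rw [← pow_add]
      congr 1
      omega
    have key : q ^ (2 * Sm l z.2) * (1 - q ^ (2 * z.2 l + 2))
        - q^2 * (q ^ (2 * Sm l z.2) * (1 - q ^ (2 * z.2 l)))
        = q ^ (2 * Sm l z.2) * (1 - q^2) := by
      rw [← hq2p]
      ring
    push_cast
    rw [show ((1:ℂ) - (q:ℂ)^2)⁻¹ * ((q:ℂ) ^ (2 * Sm l z.2) * (1 - (q:ℂ) ^ (2 * z.2 l + 2))
          - (q:ℂ)^2 * ((q:ℂ) ^ (2 * Sm l z.2) * (1 - (q:ℂ) ^ (2 * z.2 l))))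
        = ((1:ℂ) - (q:ℂ)^2)⁻¹ * (((1:ℂ) - (q:ℂ)^2) * (q:ℂ) ^ (2 * Sm l z.2)) from by
          rw [show ((q:ℂ) ^ (2 * z.2 l + 2)) = (q:ℂ)^2 * (q:ℂ) ^ (2 * z.2 l) from by
            rw [← pow_add]; congr 1; omega]
          ring]
    rw [← mul_assoc, inv_mul_cancel₀ (by
      have : ((1 - q^2 : ℝ) : ℂ) ≠ 0 := by
        exact_mod_cast Complex.ofReal_ne_zero.mpr (ne_of_gt hδ)
      push_cast at this
      exact this), one_mul]
  -- scalar weight functions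
  set αr : Idx n → ℝ := fun z => ((q ^ (2 * Sm l z.2)) ^ m - t) / (1 - t) with hαr_def
  set dr : Idx n → ℝ := fun z => q ^ (2 * Sm l z.2) * (1 - q ^ (2 * z.2 l + 2)) with hdr_def
  set μr : Idx n → ℝ := fun z => αr z ^ 2 * dr z with hμr_def
  -- the operator A (approximate spectral projection)
  set A : Hsp (Idx n) →L[ℂ] Hsp (Idx n) :=
    (((1 - t : ℝ) : ℂ))⁻¹ • (D ^ m - ((t : ℝ) : ℂ) • 1) with hA_def
  have hA : IsDg A (fun z : Idx n => ((αr z : ℝ) : ℂ)) := by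
    have h := ((hD.pow m).sub (isDg_one.smul ((t : ℝ) : ℂ))).smul (((1 - t : ℝ) : ℂ))⁻¹
    refine h.congr fun z => ?_
    simp only [hαr_def]
    push_cast
    rw [mul_one, div_eq_inv_mul]
  set Mop : Hsp (Idx n) →L[ℂ] Hsp (Idx n) := A * (star X * X) * A with hMop_def
  have hMop : IsDg Mop (fun z : Idx n => ((μr z : ℝ) : ℂ)) := by
    have h := (hA.mul hd1).mul hA
    refine h.congr fun z => ?_
    simp only [hμr_def, hdr_def]
    push_cast
    ring
  set P : Polynomial ℂ := p.map (algebraMap ℝ ℂ) with hP_def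
  have hPd : IsDg (Polynomial.aeval Mop P)
      (fun z : Idx n => ((Polynomial.eval (μr z) p : ℝ) : ℂ)) := by
    refine (hMop.aeval P).congr fun z => ?_
    rw [hP_def, Polynomial.eval_map]
    exact Polynomial.eval₂_at_apply (algebraMap ℝ ℂ) (μr z)
  have hE : IsSh (τc l) (χc l) (X * (A * Polynomial.aeval Mop P))
      (fun z : Idx n => wXc q l z
        * (((αr z : ℝ) : ℂ) * ((Polynomial.eval (μr z) p : ℝ) : ℂ))) :=
    IsSh.mul_dg (τc l) (χc l) hXsh (hA.mul hPd)
  have hb1 : IsDg ((1 : Hsp (Idx n) →L[ℂ] Hsp (Idx n)) - A)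
      (fun z : Idx n => 1 - ((αr z : ℝ) : ℂ)) := isDg_one.sub hA
  set b : Hsp (Idx n) →L[ℂ] Hsp (Idx n) :=
    1 - A + X * (A * Polynomial.aeval Mop P) with hb_def
  -- the error weights
  set uu : Idx n → ℂ := fun z => vd z - (1 - ((αr z : ℝ) : ℂ)) with huu_def
  set ww : Idx n → ℂ := fun z => vs z - wXc q l z
      * (((αr z : ℝ) : ℂ) * ((Polynomial.eval (μr z) p : ℝ) : ℂ)) with hww_def
  have hpt : ∀ (f : Hsp (Idx n)) (y : Idx n), (((V - b) f : Hsp (Idx n)) : Idx n → ℂ) y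
      = uu y * (f : Idx n → ℂ) y
        + (if χc l y then ww (τc l y) * (f : Idx n → ℂ) (τc l y) else 0) := by
    intro f y
    rw [ContinuousLinearMap.sub_apply, lp.coeFn_sub, Pi.sub_apply, hb_def,
      ContinuousLinearMap.add_apply, lp.coeFn_add, Pi.add_apply, hb1 f y, hE f y,
      hVop, ContinuousLinearMap.add_apply, lp.coeFn_add, Pi.add_apply, dgOp_apply,
      shOp_apply (σc l) (τc l) (χc l) (hστc l)]
    simp only [huu_def, hww_def]
    by_cases hχ : χc l y
    · rw [if_pos hχ, if_pos hχ, if_pos hχ]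
      ring
    · rw [if_neg hχ, if_neg hχ, if_neg hχ]
      ring
  have huu : ∀ y : Idx n, ‖uu y‖ ≤ η := by
    intro y
    simp only [huu_def, hvd_def]
    by_cases h : Sm l y.2 = 0
    · rw [if_pos h]
      have hα1 : αr y = 1 := by simp only [hαr_def]; rw [h]; exact hα0
      rw [hα1]
      simpa using hη_nn
    · rw [if_neg h]
      have hcast : (1:ℂ) - (1 - ((αr y : ℝ) : ℂ)) = ((αr y : ℝ) : ℂ) := by ring
      rw [hcast, Complex.norm_real, Real.norm_eq_abs]
      simp only [hαr_def]
      exact hαb _ (Nat.one_le_iff_ne_zero.mpr h)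
  have hww : ∀ y : Idx n, ‖ww y‖ ≤ ε/3 + η * M := by
    intro y
    simp only [hww_def, hvs_def]
    by_cases h : Sm l y.2 = 0
    · have hα1 : αr y = 1 := by simp only [hαr_def]; rw [h]; exact hα0
      have hq0Sm : q ^ Sm l y.2 = 1 := by rw [h, pow_zero]
      have hu1 : 1 - q^2 ≤ 1 - q ^ (2 * y.2 l + 2) := by
        have := pow_le_pow_of_le_one hq0.le hq1.le (show 2 ≤ 2 * y.2 l + 2 by omega)
        linarith
      have hu2 : 1 - q ^ (2 * y.2 l + 2) ≤ 1 := by linarith [hpnn (2 * y.2 l + 2)]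
      have hu0 : 0 < 1 - q ^ (2 * y.2 l + 2) := lt_of_lt_of_le hδ hu1
      have hμu : μr y = 1 - q ^ (2 * y.2 l + 2) := by
        simp only [hμr_def, hdr_def]
        rw [hα1, one_pow, one_mul, h]
        norm_num
      have hwXy : wXc q l y = ((Real.sqrt (1 - q ^ (2 * y.2 l + 2)) : ℝ) : ℂ) := by
        rw [wXc, hq0Sm, one_mul]
      rw [if_pos h, hα1, hμu, hwXy]
      have hcast : (1:ℂ) - ((Real.sqrt (1 - q ^ (2 * y.2 l + 2)) : ℝ) : ℂ)
            * ((((1:ℝ)) : ℂ) * ((Polynomial.eval (1 - q ^ (2 * y.2 l + 2)) p : ℝ) : ℂ))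
          = (((1 - Real.sqrt (1 - q ^ (2 * y.2 l + 2))
              * Polynomial.eval (1 - q ^ (2 * y.2 l + 2)) p : ℝ)) : ℂ) := by
        push_cast
        ring
      rw [hcast, Complex.norm_real, Real.norm_eq_abs]
      have hs0 : Real.sqrt (1 - q ^ (2 * y.2 l + 2)) ≠ 0 :=
        ne_of_gt (Real.sqrt_pos.mpr hu0)
      have hkey : 1 - Real.sqrt (1 - q ^ (2 * y.2 l + 2))
            * Polynomial.eval (1 - q ^ (2 * y.2 l + 2)) p
          = Real.sqrt (1 - q ^ (2 * y.2 l + 2))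
            * ((Real.sqrt (1 - q ^ (2 * y.2 l + 2)))⁻¹
              - Polynomial.eval (1 - q ^ (2 * y.2 l + 2)) p) := by
        rw [mul_sub, mul_inv_cancel₀ hs0]
      rw [hkey, abs_mul]
      have h5 : |Real.sqrt (1 - q ^ (2 * y.2 l + 2))| ≤ 1 := by
        rw [abs_of_nonneg (Real.sqrt_nonneg _)]
        calc Real.sqrt (1 - q ^ (2 * y.2 l + 2)) ≤ Real.sqrt 1 := Real.sqrt_le_sqrt hu2
          _ = 1 := Real.sqrt_one
      have h6 : |(Real.sqrt (1 - q ^ (2 * y.2 l + 2)))⁻¹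
          - Polynomial.eval (1 - q ^ (2 * y.2 l + 2)) p| ≤ ε/3 := by
        rw [abs_sub_comm]
        exact le_of_lt (hp _ ⟨hu1, hu2⟩)
      have h7 : (0:ℝ) ≤ η * M := mul_nonneg hη_nn hMnn
      calc |Real.sqrt (1 - q ^ (2 * y.2 l + 2))|
            * |(Real.sqrt (1 - q ^ (2 * y.2 l + 2)))⁻¹
              - Polynomial.eval (1 - q ^ (2 * y.2 l + 2)) p| ≤ 1 * (ε/3) :=
            mul_le_mul h5 h6 (abs_nonneg _) (by norm_num)
        _ = ε/3 := by ring
        _ ≤ ε/3 + η * M := by linarith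
    · rw [if_neg h]
      have hαa : |αr y| ≤ η := by
        simp only [hαr_def]
        exact hαb _ (Nat.one_le_iff_ne_zero.mpr h)
      have hdr0 : 0 ≤ dr y := by
        simp only [hdr_def]
        exact mul_nonneg (hpnn _) (by linarith [hple1 (2 * y.2 l + 2)])
      have hdr1 : dr y ≤ 1 := by
        simp only [hdr_def]
        have h1 := hple1 (2 * Sm l y.2)
        have h2 := hpnn (2 * Sm l y.2)
        have h3 := hpnn (2 * y.2 l + 2)
        nlinarith
      have hα2 : αr y ^ 2 ≤ 1 := by
        rw [← sq_abs]
        exact pow_le_one₀ (abs_nonneg _) (hαa.trans hη1)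
      have hμ0 : 0 ≤ μr y := by
        simp only [hμr_def]
        exact mul_nonneg (sq_nonneg _) hdr0
      have hμ1 : μr y ≤ 1 := by
        simp only [hμr_def]
        nlinarith [sq_nonneg (αr y)]
      have hnorm_eq : ‖(0:ℂ) - wXc q l y
            * (((αr y : ℝ) : ℂ) * ((Polynomial.eval (μr y) p : ℝ) : ℂ))‖
          = ‖wXc q l y‖ * (|αr y| * |Polynomial.eval (μr y) p|) := by
        rw [zero_sub, norm_neg, norm_mul, norm_mul, Complex.norm_real, Complex.norm_real,
          Real.norm_eq_abs, Real.norm_eq_abs]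
      rw [hnorm_eq]
      have h8 : |Polynomial.eval (μr y) p| ≤ M := hM _ ⟨hμ0, hμ1⟩
      have h9 : |αr y| * |Polynomial.eval (μr y) p| ≤ η * M :=
        mul_le_mul hαa h8 (abs_nonneg _) hη_nn
      calc ‖wXc q l y‖ * (|αr y| * |Polynomial.eval (μr y) p|) ≤ 1 * (η * M) :=
            mul_le_mul (hwX1 y) h9 (by positivity) (by norm_num)
        _ = η * M := by ring
        _ ≤ ε/3 + η * M := by linarith
  -- membership of b
  have hXmem : X ∈ StarAlgebra.adjoin ℂ ({X} : Set (Hsp (Idx n) →L[ℂ] Hsp (Idx n))) :=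
    StarAlgebra.subset_adjoin ℂ _ (Set.mem_singleton X)
  have hsmulmem : ∀ (c : ℂ) (T : Hsp (Idx n) →L[ℂ] Hsp (Idx n)),
      T ∈ StarAlgebra.adjoin ℂ ({X} : Set (Hsp (Idx n) →L[ℂ] Hsp (Idx n))) →
      c • T ∈ StarAlgebra.adjoin ℂ ({X} : Set (Hsp (Idx n) →L[ℂ] Hsp (Idx n))) := by
    intro c T hT
    rw [Algebra.smul_def]
    exact mul_mem (algebraMap_mem _ c) hT
  have hD_mem : D ∈ StarAlgebra.adjoin ℂ ({X} : Set (Hsp (Idx n) →L[ℂ] Hsp (Idx n))) := by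
    rw [hD_def]
    exact hsmulmem _ _ (sub_mem (mul_mem (star_mem hXmem) hXmem)
      (hsmulmem _ _ (mul_mem hXmem (star_mem hXmem))))
  have hA_mem : A ∈ StarAlgebra.adjoin ℂ ({X} : Set (Hsp (Idx n) →L[ℂ] Hsp (Idx n))) := by
    rw [hA_def]
    exact hsmulmem _ _ (sub_mem (pow_mem hD_mem m) (hsmulmem _ _ (one_mem _)))
  have hMop_mem : Mop ∈ StarAlgebra.adjoin ℂ ({X} : Set (Hsp (Idx n) →L[ℂ] Hsp (Idx n))) := by
    rw [hMop_def]
    exact mul_mem (mul_mem hA_mem (mul_mem (star_mem hXmem) hXmem)) hA_mem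
  have hb_mem : b ∈ StarAlgebra.adjoin ℂ ({X} : Set (Hsp (Idx n) →L[ℂ] Hsp (Idx n))) := by
    rw [hb_def]
    exact add_mem (sub_mem (one_mem _) hA_mem)
      (mul_mem hXmem (mul_mem hA_mem (mem_of_aeval hMop_mem P)))
  refine ⟨b, hb_mem, ?_⟩
  have hnorm := norm_le_mixed (σc l) (τc l) (χc l) (hστc l) (V - b) uu ww hη_nn
    (by positivity) huu hww hpt
  calc ‖V - b‖ ≤ η + (ε/3 + η * M) := hnorm
    _ < ε := by nlinarith [hηM, hε]

end Master

end S13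


/-- For every integer `k ≥ 2` and `q ∈ (0,1)`, the operator `V` (which shifts `ℤ` and the last
`ℕ`-coordinate when the first `k−2` coordinates vanish, and is the identity otherwise) belongs
to `B_k(q)`; it is an isometry, and `1 − V V*` is the orthogonal projection onto the closed
linear span of `{e_{(m,0)} : m ∈ ℤ}` (i.e. `1 − VV* = 1 ⊗ p^{⊗(k−1)}`). -/
theorem stmt_13 (k : ℕ) (hk : 2 ≤ k) (q : ℝ) (hq : q ∈ Set.Ioo (0 : ℝ) 1)
    (x : Fin (k - 1) → (Hk k →L[ℂ] Hk k)) (xtop : Hk k →L[ℂ] Hk k)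
    (hx : ∀ l, IsXl k q l (x l)) (hxtop : IsXtop k q xtop)
    (V : Hk k →L[ℂ] Hk k)
    (hV : ∀ (m : ℤ) (a : Fin (k - 1) → ℕ),
      V (ek k (m, a)) =
        if ∀ i : Fin (k - 1), (i : ℕ) < k - 2 → a i = 0 then
          ek k (m + 1, a + Pi.single (⟨k - 2, by omega⟩ : Fin (k - 1)) 1)
        else ek k (m, a)) :
    V ∈ Bk k x xtop ∧ star V * V = 1 ∧
      (∀ (m : ℤ) (a : Fin (k - 1) → ℕ),
        (1 - V * star V) (ek k (m, a)) = if a = 0 then ek k (m, a) else 0) := by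
  obtain ⟨hq0, hq1⟩ := hq
  set l : Fin (k - 1) := ⟨k - 2, by omega⟩ with hl_def
  have hl : ∀ i : Fin (k - 1), i ≤ l := by
    intro i
    rw [Fin.le_def]
    have := i.isLt
    simp only [hl_def]
    omega
  have hek : ∀ z : S13.Idx (k - 1), ek k z = S13.bv z := fun z => rfl
  -- the hypothesis on X = x l in the master form
  have hX' : ∀ z : S13.Idx (k - 1),
      (x l) (S13.bv z) = S13.wXc q l z • (S13.bv (S13.σc l z) : S13.Hsp (S13.Idx (k-1))) := by
    rintro ⟨m, a⟩
    have h := hx l m a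
    rw [hek] at h
    exact h
  -- the hypothesis on V in the master form
  have hV' : ∀ z : S13.Idx (k - 1),
      V (S13.bv z) = if S13.Sm l z.2 = 0 then (S13.bv (S13.σc l z) : S13.Hsp (S13.Idx (k-1)))
        else S13.bv z := by
    rintro ⟨m, a⟩
    have h := hV m a
    rw [hek] at h
    have hcond : (∀ i : Fin (k - 1), (i : ℕ) < k - 2 → a i = 0) ↔ S13.Sm l a = 0 := by
      rw [S13.Sm_eq_zero_iff]
      constructor
      · intro hc i hi
        exact hc i (by rwa [Fin.lt_def] at hi)
      · intro hc i hi
        exact hc i (by rwa [Fin.lt_def])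
    by_cases hc : S13.Sm l a = 0
    · rw [if_pos (hcond.mpr hc)] at h
      rw [h, if_pos hc]
      rfl
    · rw [if_neg (fun hcc => hc (hcond.mp hcc))] at h
      rw [h, if_neg hc]
  obtain ⟨happrox, hisom, hproj⟩ :=
    S13.master l hl hq0 hq1 (x l) V hX' hV'
  refine ⟨?_, hisom, ?_⟩
  · -- membership in the closure
    show V ∈ closure ((StarAlgebra.adjoin ℂ (Set.range x ∪ {xtop})
      : StarSubalgebra ℂ (Hk k →L[ℂ] Hk k)) : Set (Hk k →L[ℂ] Hk k))
    rw [Metric.mem_closure_iff]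
    intro ε hε
    obtain ⟨b, hb_mem, hb⟩ := happrox ε hε
    refine ⟨b, ?_, ?_⟩
    · have hle : StarAlgebra.adjoin ℂ ({x l} : Set (Hk k →L[ℂ] Hk k))
          ≤ StarAlgebra.adjoin ℂ (Set.range x ∪ {xtop}) := by
        apply StarAlgebra.adjoin_le
        intro T hT
        rw [Set.mem_singleton_iff] at hT
        subst hT
        exact StarAlgebra.subset_adjoin ℂ _ (Set.mem_union_left _ ⟨l, rfl⟩)
      exact hle hb_mem
    · rw [dist_eq_norm]
      exact hb
  · intro m a
    have h := hproj (m, a)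
    rw [hek]
    exact h
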